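/- Suppose i ≡ 0 (mod 3) and j ≢ 0 (mod 3), and let (A',B') be an optimal alignment between A[1..i] and B[1..j] in which the last column aligns B[j] with a gap. Then D(i,j) = D(i,j−1), i.e., removing the last column yields an optimal alignment of A[1..i] and B[1..j−1] of the same score. -/

import Mathlib

/-- A nucleotide: one of the four letters a, c, g, t. -/
abbrev Nuc := Fin 4

/-- A column entry of an alignment: a nucleotide or a gap symbol '-' (`none`). -/
abbrev Col := Option Nuc

/-- `(A', B')` is an alignment between DNA sequences `A` and `B`:
both rows have the same length, no column consists of two gaps, and
removing the gaps from `A'` (resp. `B'`) yields `A` (resp. `B`). -/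
def isAlignment (A B : List Nuc) (A' B' : List Col) : Prop :=
  A'.length = B'.length ∧
  (∀ p ∈ A'.zip B', p.1 ≠ none ∨ p.2 ≠ none) ∧
  A'.filterMap id = A ∧ B'.filterMap id = B

attribute [local instance] Classical.propDecidable

noncomputable section

/-- Number of non-gap symbols among the first `k` columns of a row `S`. -/
def nongap (S : List Col) (k : ℕ) : ℕ := ((S.take k).filterMap id).length

/-- The codon of the underlying sequence of row `S` ending at column `k`
(0-based) is *grouped*: columns `k-2`, `k-1`, `k` are all non-gap and the
non-gap symbol at column `k` is the last nucleotide of a codon (its 1-based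
position in the underlying sequence is a multiple of 3). -/
def isCodonEnd (S : List Col) (k : ℕ) : Prop :=
  2 ≤ k ∧ k < S.length ∧
  (S.getD (k-2) none).isSome ∧ (S.getD (k-1) none).isSome ∧ (S.getD k none).isSome ∧
  nongap S (k+1) % 3 = 0

/-- `M_{A→B}`: end columns of matching codons (a grouped codon of `A`
aligned exactly with a grouped codon of `B`). -/
def Mset (A' B' : List Col) : Finset ℕ :=
  (Finset.range A'.length).filter fun k => isCodonEnd A' k ∧ isCodonEnd B' k

/-- `U_{A→B}`: end columns of unmatching codons (a grouped codon of `A`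
aligned with three non-gap symbols of `B` not forming a codon of `B`). -/
def Uset (A' B' : List Col) : Finset ℕ :=
  (Finset.range A'.length).filter fun k =>
    isCodonEnd A' k ∧ ¬ isCodonEnd B' k ∧
    (B'.getD (k-2) none).isSome ∧ (B'.getD (k-1) none).isSome ∧ (B'.getD k none).isSome

/-- `Indel_{A→B}`: end columns of deleted codons (a grouped codon of `A`
aligned with three gap symbols). -/
def IndelSet (A' B' : List Col) : Finset ℕ :=
  (Finset.range A'.length).filter fun k =>
    isCodonEnd A' k ∧
    B'.getD (k-2) none = none ∧ B'.getD (k-1) none = none ∧ B'.getD k none = none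

/-- `MFS_{A→B}`: columns of matching nucleotides belonging to frameshift
codons of `A`. -/
def MFSset (A' B' : List Col) : Finset ℕ :=
  (Finset.range A'.length).filter fun k =>
    (∀ d ∈ ({k, k+1, k+2} : Finset ℕ),
        d ∉ Mset A' B' ∪ Uset A' B' ∪ IndelSet A' B') ∧
    (A'.getD k none).isSome ∧ (B'.getD k none).isSome

/-- Codon indices (0-based, among the `|A|/3` codons of `A`) of the
frameshift codons of `A`: codons whose end column is counted in none of
`M`, `U`, `Indel`. -/
def FScodons (A' B' : List Col) : Finset ℕ :=
  (Finset.range ((A'.filterMap id).length / 3)).filter fun i =>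
    ∀ k ∈ Mset A' B' ∪ Uset A' B' ∪ IndelSet A' B', nongap A' (k+1) ≠ 3 * (i+1)

/-- The triple of nucleotides of row `S` at columns `k-2`, `k-1`, `k`. -/
def triAt (S : List Col) (k : ℕ) : Nuc × Nuc × Nuc :=
  ((S.getD (k-2) none).getD 0, (S.getD (k-1) none).getD 0, (S.getD k none).getD 0)

/-- The nucleotide of row `S` at column `k`. -/
def nucAt (S : List Col) (k : ℕ) : Nuc := (S.getD k none).getD 0

/-- The scoring scheme: an amino-acid (codon) scoring function, a nucleotide
scoring function, and the gap, frameshift-opening and frameshift-extension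
costs. -/
structure ScoreParams where
  saa : Nuc × Nuc × Nuc → Nuc × Nuc × Nuc → ℝ
  san : Nuc → Nuc → ℝ
  gap_cost : ℝ
  fs_open_cost : ℝ
  fs_ext_cost : ℝ

/-- `score(A')`, the half of the score of the alignment contributed by the
codons of `A`. -/
def halfScore (P : ScoreParams) (A' B' : List Col) : ℝ :=
  (∑ k ∈ Mset A' B', P.saa (triAt A' k) (triAt B' k) / 2) +
  (∑ k ∈ Uset A' B', (P.saa (triAt A' k) (triAt B' k) / 2 + P.fs_ext_cost)) +
  ((IndelSet A' B').card : ℝ) * P.gap_cost +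
  ((((A'.filterMap id).length / 3 : ℕ) : ℝ) - ((Mset A' B').card : ℝ)
      - ((Uset A' B').card : ℝ) - ((IndelSet A' B').card : ℝ)) * P.fs_open_cost +
  (∑ k ∈ MFSset A' B', P.san (nucAt A' k) (nucAt B' k) / 2)

/-- The score of an alignment `(A',B')`: `score(A') + score(B')`. -/
def score (P : ScoreParams) (A' B' : List Col) : ℝ :=
  halfScore P A' B' + halfScore P B' A'

/-- `D(i,j)`: the maximal score of an alignment between the prefixes
`A[1..i]` and `B[1..j]`. -/
def Dopt (P : ScoreParams) (A B : List Nuc) (i j : ℕ) : ℝ :=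
  sSup { s | ∃ A' B', isAlignment (A.take i) (B.take j) A' B' ∧ s = score P A' B' }

end

/-!
Appending a column that aligns a gap of `A` with a nucleotide of `B` leaves the score unchanged
as long as that nucleotide does not complete a codon of `B`: the new column is the end of a codon
in neither row, it cannot hold a matching nucleotide pair, and the number of codons of either
sequence stays the same. So the scores of alignments of `A[1..i]` and `B[1..j-1]` are exactly
the scores of such extended alignments of `A[1..i]` and `B[1..j]`, which are bounded by `D(i,j)`;
an optimal alignment ending in such a column therefore reaches `D(i,j)` already without it.
-/

/- The decidability instances are implicit so that they are unified with the classical ones in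
the filters of `Mset`, `MFSset`, …, instead of being synthesized to non-defeq ones. -/

theorem Finset.lt_of_mem_filter_range {p : ℕ → Prop} {_ : DecidablePred p} {n k : ℕ}
    (hk : k ∈ (range n).filter p) : k < n :=
  Finset.mem_range.1 (Finset.mem_of_mem_filter k hk)

theorem Finset.filter_range_add_one_of_not {p q : ℕ → Prop} {_ : DecidablePred p}
    {_ : DecidablePred q} {n : ℕ} (hn : ¬ p n) (h : ∀ k < n, p k ↔ q k) :
    (range (n + 1)).filter p = (range n).filter q := by
  rw [Finset.range_add_one, Finset.filter_insert, if_neg hn]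
  exact Finset.filter_congr fun k hk => h k (Finset.mem_range.1 hk)

theorem List.take_eq_take_sub_one_append_getD {α : Type*} {l : List α} {j : ℕ} (d : α)
    (hj1 : 1 ≤ j) (hj : j ≤ l.length) : l.take j = l.take (j - 1) ++ [l.getD (j - 1) d] := by
  obtain ⟨j, rfl⟩ : ∃ j', j = j' + 1 := ⟨j - 1, by omega⟩
  have hlt : j < l.length := by omega
  rw [Nat.add_sub_cancel, List.take_add_one, List.getElem?_eq_getElem hlt,
    List.getD_eq_getElem _ _ hlt]
  rfl

section AppendColumn

variable {S T : List Col} {a b : Col} {k : ℕ}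

theorem getD_append_singleton_of_lt (hk : k < S.length) :
    (S ++ [a]).getD k none = S.getD k none :=
  List.getD_append _ _ _ _ hk

theorem nongap_append_singleton_of_le (hk : k ≤ S.length) : nongap (S ++ [a]) k = nongap S k := by
  rw [nongap, nongap, List.take_append_of_le_length hk]

theorem isCodonEnd_append_singleton_iff (hk : k < S.length) :
    isCodonEnd (S ++ [a]) k ↔ isCodonEnd S k := by
  unfold isCodonEnd
  rw [getD_append_singleton_of_lt (by omega), getD_append_singleton_of_lt (by omega),
    getD_append_singleton_of_lt hk, nongap_append_singleton_of_le hk, List.length_append,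
    List.length_singleton]
  constructor <;> rintro ⟨h2, -, h⟩ <;> exact ⟨h2, by omega, h⟩

theorem triAt_append_singleton (hk : k < S.length) : triAt (S ++ [a]) k = triAt S k := by
  rw [triAt, triAt, getD_append_singleton_of_lt (by omega), getD_append_singleton_of_lt (by omega),
    getD_append_singleton_of_lt hk]

theorem nucAt_append_singleton (hk : k < S.length) : nucAt (S ++ [a]) k = nucAt S k := by
  rw [nucAt, nucAt, getD_append_singleton_of_lt hk]

variable (hlen : S.length = T.length) (hend : ¬ isCodonEnd (S ++ [a]) S.length)
include hlen hend

theorem Mset_append_singleton : Mset (S ++ [a]) (T ++ [b]) = Mset S T := by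
  unfold Mset
  simp only [List.length_append, List.length_singleton]
  refine Finset.filter_range_add_one_of_not (fun h => hend h.1) fun k hk => ?_
  rw [isCodonEnd_append_singleton_iff hk, isCodonEnd_append_singleton_iff (hlen ▸ hk)]

theorem Uset_append_singleton : Uset (S ++ [a]) (T ++ [b]) = Uset S T := by
  unfold Uset
  simp only [List.length_append, List.length_singleton]
  refine Finset.filter_range_add_one_of_not (fun h => hend h.1) fun k hk => ?_
  rw [isCodonEnd_append_singleton_iff hk, isCodonEnd_append_singleton_iff (hlen ▸ hk),
    getD_append_singleton_of_lt (by omega), getD_append_singleton_of_lt (by omega),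
    getD_append_singleton_of_lt (hlen ▸ hk)]

theorem IndelSet_append_singleton : IndelSet (S ++ [a]) (T ++ [b]) = IndelSet S T := by
  unfold IndelSet
  simp only [List.length_append, List.length_singleton]
  refine Finset.filter_range_add_one_of_not (fun h => hend h.1) fun k hk => ?_
  rw [isCodonEnd_append_singleton_iff hk, getD_append_singleton_of_lt (by omega),
    getD_append_singleton_of_lt (by omega), getD_append_singleton_of_lt (hlen ▸ hk)]

theorem MFSset_append_singleton (hgap : a = none ∨ b = none) :
    MFSset (S ++ [a]) (T ++ [b]) = MFSset S T := by
  unfold MFSset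
  simp only [List.length_append, List.length_singleton]
  refine Finset.filter_range_add_one_of_not (fun h => ?_) fun k hk => ?_
  · obtain ⟨-, hA, hB⟩ := h
    rw [List.getD_append_right _ _ _ _ le_rfl, Nat.sub_self] at hA
    rw [hlen, List.getD_append_right _ _ _ _ le_rfl, Nat.sub_self] at hB
    rcases hgap with rfl | rfl <;> simp_all
  · rw [Mset_append_singleton hlen hend, Uset_append_singleton hlen hend,
      IndelSet_append_singleton hlen hend, getD_append_singleton_of_lt hk,
      getD_append_singleton_of_lt (hlen ▸ hk)]

theorem halfScore_append_singleton (hgap : a = none ∨ b = none)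
    (hcodons : ((S ++ [a]).filterMap id).length / 3 = (S.filterMap id).length / 3) (P : ScoreParams) :
    halfScore P (S ++ [a]) (T ++ [b]) = halfScore P S T := by
  unfold halfScore
  rw [Mset_append_singleton hlen hend, Uset_append_singleton hlen hend,
    IndelSet_append_singleton hlen hend, MFSset_append_singleton hlen hend hgap, hcodons]
  congr 1; congr 1; congr 1; congr 1
  all_goals
    refine Finset.sum_congr rfl fun k hk => ?_
    replace hk : k < S.length := Finset.lt_of_mem_filter_range hk
    simp only [triAt_append_singleton hk, triAt_append_singleton (hlen ▸ hk),
      nucAt_append_singleton hk, nucAt_append_singleton (hlen ▸ hk)]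

end AppendColumn

theorem score_append_gap_nuc (P : ScoreParams) {S T : List Col} (x : Nuc)
    (hlen : S.length = T.length) (hT : (T.filterMap id).length % 3 ≠ 2) :
    score P (S ++ [none]) (T ++ [some x]) = score P S T := by
  have hfS : (S ++ [none]).filterMap id = S.filterMap id := by simp
  have hfT : ((T ++ [some x]).filterMap id).length = (T.filterMap id).length + 1 := by simp
  have hendS : ¬ isCodonEnd (S ++ [none]) S.length := fun h => by
    simpa [List.getD_append_right] using h.2.2.2.2.1
  have hendT : ¬ isCodonEnd (T ++ [some x]) T.length := fun h => by
    have := h.2.2.2.2.2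
    rw [nongap, List.take_of_length_le (by simp), hfT] at this
    omega
  rw [score, score, halfScore_append_singleton hlen hendS (.inl rfl) (by rw [hfS]),
    halfScore_append_singleton hlen.symm hendT (.inr rfl) (by omega)]

theorem isAlignment_append_gap_nuc_iff {A B : List Nuc} {S T : List Col} {x : Nuc} :
    isAlignment A (B ++ [x]) (S ++ [none]) (T ++ [some x]) ↔ isAlignment A B S T := by
  unfold isAlignment
  simp only [List.length_append, List.length_singleton, Nat.add_right_cancel_iff,
    List.filterMap_append, List.filterMap_cons, List.filterMap_nil, id, List.append_nil,
    List.append_cancel_right_eq]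
  constructor
  · rintro ⟨hlen, hcol, hA, hB⟩
    exact ⟨hlen, fun p hp => hcol p (by rw [List.zip_append hlen]; exact List.mem_append_left _ hp),
      hA, hB⟩
  · rintro ⟨hlen, hcol, hA, hB⟩
    refine ⟨hlen, fun p hp => ?_, hA, hB⟩
    rw [List.zip_append hlen] at hp
    rcases List.mem_append.1 hp with hp | hp
    · exact hcol p hp
    · simp_all

theorem length_le_filterMap_length_add :
    ∀ {S T : List Col}, S.length = T.length → (∀ p ∈ S.zip T, p.1 ≠ none ∨ p.2 ≠ none) →
      S.length ≤ (S.filterMap id).length + (T.filterMap id).length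
  | [], _, _, _ => by simp
  | _ :: _, [], hlen, _ => by simp at hlen
  | a :: S, b :: T, hlen, hcol => by
    have ih := length_le_filterMap_length_add (S := S) (T := T) (by simpa using hlen)
      fun p hp => hcol p (List.mem_cons_of_mem _ hp)
    have hab := hcol (a, b) List.mem_cons_self
    rcases a with _ | a <;> rcases b with _ | b <;> simp_all <;> omega

theorem bddAbove_alignment_scores (P : ScoreParams) (A B : List Nuc) :
    BddAbove {s | ∃ A' B', isAlignment A B A' B' ∧ s = score P A' B'} := by
  let n := A.length + B.length
  refine ((List.finite_length_le Col n).prod (List.finite_length_le Col n) |>.image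
    fun p => score P p.1 p.2).subset ?_ |>.bddAbove
  rintro s ⟨A', B', ⟨hlen, hcol, hA, hB⟩, rfl⟩
  have h := length_le_filterMap_length_add hlen hcol
  rw [hA, hB] at h
  exact ⟨(A', B'), ⟨h, (hlen ▸ h : B'.length ≤ n)⟩, rfl⟩

theorem score_le_Dopt (P : ScoreParams) {A B : List Nuc} {i j : ℕ} {A' B' : List Col}
    (hal : isAlignment (A.take i) (B.take j) A' B') : score P A' B' ≤ Dopt P A B i j :=
  le_csSup (bddAbove_alignment_scores P _ _) ⟨A', B', hal, rfl⟩

theorem last_column_gap_general (P : ScoreParams) (A B : List Nuc) (i j : ℕ)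
    (hj : j % 3 ≠ 0) (hjm : j ≤ B.length)
    (hj1 : 1 ≤ j)
    (A' B' : List Col) (hal : isAlignment (A.take i) (B.take j) A' B')
    (hopt : score P A' B' = Dopt P A B i j)
    (hlastA : A'.getLast? = some none)
    (hlastB : B'.getLast? = some (some (B.getD (j-1) 0))) :
    Dopt P A B i j = Dopt P A B i (j-1) ∧
    score P A'.dropLast B'.dropLast = Dopt P A B i (j-1) := by
  obtain ⟨S, rfl⟩ := List.getLast?_eq_some_iff.1 hlastA
  obtain ⟨T, rfl⟩ := List.getLast?_eq_some_iff.1 hlastB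
  rw [List.dropLast_concat, List.dropLast_concat]
  have htake := List.take_eq_take_sub_one_append_getD 0 hj1 hjm
  have hST := isAlignment_append_gap_nuc_iff.1 (htake ▸ hal)
  have hextend {S' T'} (h : isAlignment (A.take i) (B.take (j - 1)) S' T') :
      score P (S' ++ [none]) (T' ++ [some (B.getD (j - 1) 0)]) = score P S' T' := by
    refine score_append_gap_nuc P _ h.1 ?_
    rw [h.2.2.2, List.length_take_of_le (by omega)]
    omega
  have hmax : IsGreatest {s | ∃ S' T', isAlignment (A.take i) (B.take (j - 1)) S' T' ∧
      s = score P S' T'} (score P S T) := by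
    refine ⟨⟨S, T, hST, rfl⟩, ?_⟩
    rintro _ ⟨S', T', h, rfl⟩
    rw [← hextend h, ← hextend hST, hopt]
    exact score_le_Dopt P (htake ▸ isAlignment_append_gap_nuc_iff.2 h)
  have hD : Dopt P A B i (j - 1) = score P S T := hmax.csSup_eq
  exact ⟨by rw [← hopt, hextend hST, hD], hD.symm⟩

/-- if `i ≡ 0 (mod 3)`, `j ≢ 0 (mod 3)`, and an optimal
alignment between `A[1..i]` and `B[1..j]` has a last column aligning `B[j]`
with a gap, then `D(i,j) = D(i,j-1)`, and removing the last column yields an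
optimal alignment of `A[1..i]` and `B[1..j-1]` of the same score. -/
theorem last_column_gap (P : ScoreParams) (A B : List Nuc) (i j : ℕ)
    (hi : i % 3 = 0) (hj : j % 3 ≠ 0) (hin : i ≤ A.length) (hjm : j ≤ B.length)
    (hj1 : 1 ≤ j)
    (A' B' : List Col) (hal : isAlignment (A.take i) (B.take j) A' B')
    (hopt : score P A' B' = Dopt P A B i j)
    (hlastA : A'.getLast? = some none)
    (hlastB : B'.getLast? = some (some (B.getD (j-1) 0))) :
    Dopt P A B i j = Dopt P A B i (j-1) ∧
    score P A'.dropLast B'.dropLast = Dopt P A B i (j-1) :=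
  last_column_gap_general P A B i j hj hjm hj1 A' B' hal hopt hlastA hlastB
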